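/- arXiv:1910.10405 — 3 statements merged into one kernel-verified Lean document; each statement's English description precedes it below -/
import Mathlib

section
/- Let b ≥ 0, h ≥ 1, and a > (e²/h)^h be real numbers, and let x be a positive real number such that x − a·(log x)^h − b ≤ 0. Then x < 2^h · ( b^{1/h} + a^{1/h} · log(h^h · a) )^h. -/
open Real

/-- Subadditivity of `t ↦ t^(1/p)` for `p ≥ 1`. -/
lemma petho_subadd (u v p : ℝ) (hu : 0 ≤ u) (hv : 0 ≤ v) (hp : 1 ≤ p) :
    (u + v) ^ (1 / p) ≤ u ^ (1 / p) + v ^ (1 / p) := by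
  have hp0 : 0 < p := lt_of_lt_of_le one_pos hp
  rcases eq_or_lt_of_le hu with rfl | hu0
  · rw [zero_add, Real.zero_rpow (by positivity : (1 / p) ≠ 0), zero_add]
  rcases eq_or_lt_of_le hv with rfl | hv0
  · rw [add_zero, Real.zero_rpow (by positivity : (1 / p) ≠ 0), add_zero]
  set s := u ^ (1 / p) with hs
  set t := v ^ (1 / p) with ht
  have hs0 : 0 < s := Real.rpow_pos_of_pos hu0 _
  have ht0 : 0 < t := Real.rpow_pos_of_pos hv0 _
  have hst0 : 0 < s + t := by linarith
  have hsu : s ^ p = u := by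
    rw [hs, one_div, Real.rpow_inv_rpow hu0.le (by positivity)]
  have htv : t ^ p = v := by
    rw [ht, one_div, Real.rpow_inv_rpow hv0.le (by positivity)]
  have e1 : (s / (s + t)) ^ p ≤ s / (s + t) := by
    calc (s / (s + t)) ^ p ≤ (s / (s + t)) ^ (1 : ℝ) :=
          Real.rpow_le_rpow_of_exponent_ge (by positivity)
            (by rw [div_le_one hst0]; linarith) hp
      _ = s / (s + t) := Real.rpow_one _
  have e2 : (t / (s + t)) ^ p ≤ t / (s + t) := by
    calc (t / (s + t)) ^ p ≤ (t / (s + t)) ^ (1 : ℝ) :=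
          Real.rpow_le_rpow_of_exponent_ge (by positivity)
            (by rw [div_le_one hst0]; linarith) hp
      _ = t / (s + t) := Real.rpow_one _
  rw [Real.div_rpow hs0.le hst0.le] at e1
  rw [Real.div_rpow ht0.le hst0.le] at e2
  have hstp : 0 < (s + t) ^ p := Real.rpow_pos_of_pos hst0 _
  have key : u + v ≤ (s + t) ^ p := by
    rw [← hsu, ← htv]
    rw [div_le_div_iff₀ hstp hst0] at e1 e2
    nlinarith [hs0.le, ht0.le]
  calc (u + v) ^ (1 / p) ≤ ((s + t) ^ p) ^ (1 / p) :=
        Real.rpow_le_rpow (by linarith) key (by positivity)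
    _ = s + t := by rw [one_div, Real.rpow_rpow_inv hst0.le (by positivity)]

/-- `2 log A < A` for `A ≥ e²`. -/
lemma petho_two_log_lt (A : ℝ) (hA : Real.exp 1 ^ 2 ≤ A) : 2 * Real.log A < A := by
  have hA0 : 0 < A := lt_of_lt_of_le (by positivity) hA
  have hs : Real.sqrt A * Real.sqrt A = A := Real.mul_self_sqrt hA0.le
  have hs2 : Real.exp 1 ≤ Real.sqrt A := by
    have := Real.sqrt_le_sqrt hA
    rwa [show Real.exp 1 ^ 2 = (Real.exp 1) * (Real.exp 1) by ring,
      Real.sqrt_mul_self (Real.exp_pos 1).le] at this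
  have he : (2.7 : ℝ) < Real.exp 1 := by
    have := Real.exp_one_gt_d9; linarith
  have hlogs : Real.log (Real.sqrt A) ≤ Real.sqrt A - 1 :=
    Real.log_le_sub_one_of_pos (by positivity)
  have hlA : Real.log A = 2 * Real.log (Real.sqrt A) := by
    rw [Real.log_sqrt hA0.le]; ring
  nlinarith [hs2, hlogs, hs]

/-- Key lemma: if `y ≤ A log y + B` with `A ≥ e²`, `B ≥ 0`, `y ≥ 1`, then
`y < 2(A log A + B)`. -/
lemma petho_key (A B y : ℝ) (hA : Real.exp 1 ^ 2 ≤ A) (hB : 0 ≤ B) (hy : 1 ≤ y)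
    (hyl : y ≤ A * Real.log y + B) : y < 2 * (A * Real.log A + B) := by
  by_contra hcon
  push_neg at hcon
  set L := Real.log A with hLdef
  have hA0 : 0 < A := lt_of_lt_of_le (by positivity) hA
  have hL2 : 2 ≤ L := by
    have h1 : Real.log (Real.exp 1 ^ 2) ≤ Real.log A :=
      Real.log_le_log (by positivity) hA
    rwa [Real.log_pow, Real.log_exp, show ((2:ℕ):ℝ) * 1 = 2 by norm_num] at h1
  have h2L : 2 * L < A := petho_two_log_lt A hA
  have hL0 : 0 < L := by linarith
  set Y := 2 * (A * L + B) with hYdef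
  have hY4A : 4 * A ≤ Y := by nlinarith
  have hYpos : 0 < Y := by nlinarith
  have hyY : Y ≤ y := hcon
  -- log Y ≤ log (2 A L) + B / (A L)
  have hAL0 : 0 < 2 * (A * L) := by positivity
  have h1 : Real.log Y ≤ Real.log (2 * (A * L)) + B / (A * L) := by
    have hd : Real.log (Y / (2 * (A * L))) ≤ Y / (2 * (A * L)) - 1 :=
      Real.log_le_sub_one_of_pos (by positivity)
    rw [Real.log_div (by positivity) (by positivity)] at hd
    have hq : Y / (2 * (A * L)) - 1 = B / (A * L) := by
      field_simp [hYdef]; ring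
    linarith [hd, hq ▸ hd]
  -- log(2AL) = log 2 + log A + log L
  have h2 : Real.log (2 * (A * L)) = Real.log 2 + L + Real.log L := by
    rw [Real.log_mul (by norm_num) (by positivity), Real.log_mul (by positivity) (by positivity)]
    ring
  -- log 2 + log L < L
  have h3 : Real.log 2 + Real.log L < L := by
    have : Real.log (2 * L) < Real.log A := Real.log_lt_log (by positivity) h2L
    rwa [Real.log_mul (by norm_num) (by positivity)] at this
  -- B / (A L) ≤ B / (2 A)
  have h4 : B / (A * L) ≤ B / (2 * A) := by
    apply div_le_div_of_nonneg_left hB (by positivity)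
    nlinarith
  -- f(Y) > 0 : Y - A log Y - B > 0, i.e. A log Y + B < Y
  have hfY : A * Real.log Y + B < Y := by
    have hb1 : A * Real.log Y ≤ A * (Real.log 2 + L + Real.log L) + A * (B / (A * L)) := by
      nlinarith [h1, h2]
    have hb2 : A * (B / (A * L)) ≤ B / 2 := by
      have : A * (B / (A * L)) = B / L := by field_simp
      rw [this, div_le_div_iff₀ hL0 (by norm_num)]
      nlinarith
    nlinarith [h3, hb1, hb2]
  -- log y ≤ log Y + (y - Y)/Y
  have h5 : Real.log y ≤ Real.log Y + (y - Y) / Y := by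
    have hd : Real.log (y / Y) ≤ y / Y - 1 :=
      Real.log_le_sub_one_of_pos (by positivity)
    rw [Real.log_div (by linarith) (by positivity)] at hd
    have : y / Y - 1 = (y - Y) / Y := by field_simp
    linarith [this ▸ hd]
  -- A (y - Y)/Y ≤ (y - Y)/4
  have h6 : A * ((y - Y) / Y) ≤ (y - Y) / 4 := by
    rw [mul_div_assoc'] at *
    rw [div_le_div_iff₀ hYpos (by norm_num)]
    nlinarith [hyY, hY4A]
  have : y ≤ A * Real.log Y + B + (y - Y) / 4 := by nlinarith [hyl, h5, h6]
  linarith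

/-- Pethő's lemma: let `b ≥ 0`, `h ≥ 1`, `a > (e²/h)^h` be real numbers, and let
`x > 0` satisfy `x - a·(log x)^h - b ≤ 0`. Then
`x < 2^h · (b^(1/h) + a^(1/h)·log(h^h·a))^h`. -/
theorem petho_lemma (a b h x : ℝ) (hb : 0 ≤ b) (hh : 1 ≤ h)
    (ha : (Real.exp 1 ^ 2 / h) ^ h < a) (hx : 0 < x)
    (hineq : x - a * Real.log x ^ h - b ≤ 0) :
    x < 2 ^ h * (b ^ (1 / h) + a ^ (1 / h) * Real.log (h ^ h * a)) ^ h := by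
  have hh0 : 0 < h := lt_of_lt_of_le one_pos hh
  have he2h : 0 < Real.exp 1 ^ 2 / h := by positivity
  have ha0 : 0 < a := lt_trans (Real.rpow_pos_of_pos he2h h) ha
  -- a^(1/h) > e²/h
  have hah : Real.exp 1 ^ 2 / h < a ^ (1 / h) := by
    have := Real.rpow_lt_rpow (Real.rpow_pos_of_pos he2h h).le ha (by positivity : 0 < 1/h)
    rw [one_div]
    rwa [one_div, Real.rpow_rpow_inv he2h.le hh0.ne'] at this
  set A := h * a ^ (1 / h) with hAdef
  have hA : Real.exp 1 ^ 2 < A := by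
    have := mul_lt_mul_of_pos_left hah hh0
    rwa [mul_div_cancel₀ _ hh0.ne'] at this
  have hApos : 0 < A := lt_trans (by positivity) hA
  have hAlogA : A * Real.log A = a ^ (1 / h) * Real.log (h ^ h * a) := by
    have h1 : Real.log (h ^ h * a) = h * Real.log h + Real.log a := by
      rw [Real.log_mul (by positivity) ha0.ne', Real.log_rpow hh0]
    have h2 : Real.log A = Real.log h + (1 / h) * Real.log a := by
      rw [hAdef, Real.log_mul hh0.ne' (by positivity),
        Real.log_rpow ha0]
    rw [hAdef, h1, h2]
    field_simp
  set B := b ^ (1 / h) with hBdef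
  have hBnn : 0 ≤ B := Real.rpow_nonneg hb _
  -- the RHS inner term is > 1
  have hinner : 1 < B + A * Real.log A := by
    have hlog : 2 * h < Real.log (h ^ h * a) := by
      have h1 : Real.log (h ^ h * a) = h * Real.log h + Real.log a := by
        rw [Real.log_mul (by positivity) ha0.ne', Real.log_rpow hh0]
      have h2 : h * (2 - Real.log h) < Real.log a := by
        have := Real.log_lt_log (Real.rpow_pos_of_pos he2h h) ha
        rw [Real.log_rpow he2h, Real.log_div (by positivity) hh0.ne',
          Real.log_pow, Real.log_exp] at this
        push_cast at this
        nlinarith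
      nlinarith
    have hA2 : 2 * Real.exp 1 ^ 2 < A * Real.log A := by
      rw [hAlogA]
      have he := Real.exp_one_gt_d9
      calc 2 * Real.exp 1 ^ 2 = (Real.exp 1 ^ 2 / h) * (2 * h) := by field_simp
        _ < a ^ (1/h) * Real.log (h ^ h * a) := by
            apply mul_lt_mul' hah.le hlog (by positivity) (by positivity)
    have he := Real.exp_one_gt_d9
    nlinarith
  rcases lt_or_ge x 1 with hx1 | hx1
  · -- small x : RHS > 1 > x
    have h2h : (1:ℝ) ≤ 2 ^ h := Real.one_le_rpow (by norm_num) hh0.le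
    have hin : (1:ℝ) < (B + A * Real.log A) ^ h := by
      calc (1:ℝ) = 1 ^ h := (Real.one_rpow h).symm
        _ < (B + A * Real.log A) ^ h := by
            apply Real.rpow_lt_rpow (by norm_num) hinner hh0
    rw [← hAlogA]
    nlinarith
  · -- main case: x ≥ 1
    have hlx : 0 ≤ Real.log x := Real.log_nonneg hx1
    set y := x ^ (1 / h) with hydef
    have hy1 : 1 ≤ y := Real.one_le_rpow hx1 (by positivity)
    have hy0 : 0 < y := lt_of_lt_of_le one_pos hy1
    have hxy : y ^ h = x := by
      rw [hydef, one_div, Real.rpow_inv_rpow hx.le hh0.ne']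
    have hlxy : Real.log x = h * Real.log y := by
      rw [← hxy, Real.log_rpow hy0]
    -- y ≤ A log y + B
    have hstep : y ≤ A * Real.log y + B := by
      have h1 : x ≤ a * Real.log x ^ h + b := by linarith
      have h2 : y ≤ (a * Real.log x ^ h + b) ^ (1 / h) :=
        Real.rpow_le_rpow hx.le h1 (by positivity)
      have h3 : (a * Real.log x ^ h + b) ^ (1 / h)
          ≤ (a * Real.log x ^ h) ^ (1 / h) + b ^ (1 / h) :=
        petho_subadd _ _ h (by positivity) hb hh
      have h4 : (a * Real.log x ^ h) ^ (1 / h) = a ^ (1 / h) * Real.log x := by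
        rw [Real.mul_rpow ha0.le (Real.rpow_nonneg hlx _), one_div,
          Real.rpow_rpow_inv hlx hh0.ne']
      have h5 : a ^ (1 / h) * Real.log x = A * Real.log y := by
        rw [hlxy, hAdef]; ring
      calc y ≤ (a * Real.log x ^ h + b) ^ (1 / h) := h2
        _ ≤ (a * Real.log x ^ h) ^ (1 / h) + b ^ (1 / h) := h3
        _ = A * Real.log y + B := by rw [h4, h5]
    have hkey : y < 2 * (A * Real.log A + B) := petho_key A B y hA.le hBnn hy1 hstep
    have hIpos : 0 < A * Real.log A + B := by nlinarith
    calc x = y ^ h := hxy.symm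
      _ < (2 * (A * Real.log A + B)) ^ h :=
          Real.rpow_lt_rpow hy0.le hkey hh0
      _ = 2 ^ h * (A * Real.log A + B) ^ h :=
          Real.mul_rpow (by norm_num) hIpos.le
      _ = 2 ^ h * (b ^ (1 / h) + a ^ (1 / h) * Real.log (h ^ h * a)) ^ h := by
          rw [hAlogA, hBdef, add_comm]
end

section
/- Let b ≥ 0 and a > e² be real numbers, and let x be a positive real number such that x − a·log x − b ≤ 0. Then x < 2·(b + a·log a). -/
/-- Pethő's lemma in the case `h = 1`: if `b ≥ 0`, `a > e²`, `x > 0` and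
`x - a·log x - b ≤ 0`, then `x < 2·(b + a·log a)`. -/
theorem petho_special_case (a b x : ℝ) (hb : 0 ≤ b) (ha : Real.exp 1 ^ 2 < a)
    (hx : 0 < x) (hineq : x - a * Real.log x - b ≤ 0) :
    x < 2 * (b + a * Real.log a) := by
  have he2 : Real.exp 1 ^ 2 = Real.exp 2 := by
    rw [sq, ← Real.exp_add]; norm_num
  have ha0 : (0:ℝ) < a := lt_trans (by positivity) ha
  set L := Real.log a with hLdef
  have hL : 2 < L := by
    rw [hLdef, ← Real.log_exp 2]
    exact Real.log_lt_log (Real.exp_pos 2) (he2 ▸ ha)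
  have hL0 : 0 < L := by linarith
  set T := 2 * (b + a * L) with hT
  have hT0 : 0 < T := by positivity
  -- log (2L) < L
  have h2L : Real.log (2 * L) < L := by
    have h1 : L / 2 + 1 < Real.exp (L / 2) :=
      Real.add_one_lt_exp (by positivity)
    have h2 : Real.exp L = Real.exp (L / 2) ^ 2 := by
      rw [sq, ← Real.exp_add]; ring_nf
    have h2L' : 2 * L < Real.exp L := by nlinarith [Real.exp_pos (L / 2)]
    calc Real.log (2 * L) < Real.log (Real.exp L) :=
          Real.log_lt_log (by positivity) h2L'
      _ = L := Real.log_exp L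
  -- log T ≤ log (2aL) + b/(aL)
  have key1 : Real.log T ≤ Real.log (2 * (a * L)) + b / (a * L) := by
    have h3 : Real.log (T / (2 * (a * L))) ≤ T / (2 * (a * L)) - 1 :=
      Real.log_le_sub_one_of_pos (by positivity)
    rw [Real.log_div (by positivity) (by positivity)] at h3
    have h4 : T / (2 * (a * L)) - 1 = b / (a * L) := by
      field_simp [hT]; ring
    linarith [h4 ▸ h3]
  have key2 : Real.log (2 * (a * L)) = Real.log (2 * L) + L := by
    rw [show (2 : ℝ) * (a * L) = (2 * L) * a by ring,
      Real.log_mul (by positivity) (by positivity)]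
  -- f(T) > 0
  have fT : 0 < T - a * Real.log T - b := by
    have h5 : a * Real.log T ≤ a * (Real.log (2 * L) + L) + b / L := by
      have := mul_le_mul_of_nonneg_left key1 (le_of_lt ha0)
      rw [key2] at this
      have h6 : a * (b / (a * L)) = b / L := by field_simp
      nlinarith
    have hbL : b / L ≤ b := by
      rw [div_le_iff₀ hL0]; nlinarith
    nlinarith [mul_pos ha0 (sub_pos.mpr h2L)]
  -- contradiction from T ≤ x
  by_contra hcon
  push_neg at hcon
  have hxT : T ≤ x := hcon
  have hTa : a < T := by nlinarith
  have hlogx : Real.log x ≤ Real.log T + (x - T) / T := by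
    have h8 : Real.log (x / T) ≤ x / T - 1 :=
      Real.log_le_sub_one_of_pos (by positivity)
    rw [Real.log_div (ne_of_gt hx) (ne_of_gt hT0)] at h8
    have : x / T - 1 = (x - T) / T := by field_simp
    linarith [this ▸ h8]
  have h9 : a * ((x - T) / T) ≤ x - T := by
    rw [mul_div_assoc']
    rw [div_le_iff₀ hT0]
    nlinarith
  nlinarith [mul_le_mul_of_nonneg_left hlogx (le_of_lt ha0)]
end

section
/- Let K be a number field of degree d, N a positive integer, ζ_N a primitive N-th root of unity, and let K̃ = K(ζ_N). Let D and D̃ be the absolute discriminants of K and K̃ respectively. Then |D̃| ≤ N^{dN} · |D|^{φ(N)}, where φ is Euler's totient function. -/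
open Matrix
open scoped ComplexOrder

/-- Special case of Hadamard's inequality. -/
lemma norm_det_sq_le_card_pow_card {n : Type*} [Fintype n] [DecidableEq n]
    (W : Matrix n n ℂ) (hW : ∀ i j, ‖W i j‖ ≤ 1) :
    ‖W.det‖ ^ 2 ≤ (Fintype.card n : ℝ) ^ (Fintype.card n) := by
  classical
  rcases isEmpty_or_nonempty n with h | h
  · simp [Matrix.det_isEmpty]
  set m := Fintype.card n with hm
  have hm0 : 0 < m := Fintype.card_pos
  set P := W * Wᴴ with hPdef
  have hP : P.PosSemidef := posSemidef_self_mul_conjTranspose W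
  have hH : P.IsHermitian := hP.1
  set lam := hH.eigenvalues with hlam
  have hlam0 : ∀ i, 0 ≤ lam i := hP.eigenvalues_nonneg
  -- ‖det W‖ ^ 2 = ∏ lam i
  have hdet : (‖W.det‖ ^ 2 : ℝ) = ∏ i, lam i := by
    have h1 : P.det = ((‖W.det‖ ^ 2 : ℝ) : ℂ) := by
      rw [hPdef, det_mul, det_conjTranspose]
      simpa using Complex.mul_conj' W.det
    have h2 : P.det = ((∏ i, lam i : ℝ) : ℂ) := by
      rw [hH.det_eq_prod_eigenvalues]; push_cast; rfl
    exact_mod_cast h1.symm.trans h2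
  -- ∑ lam i ≤ m * m
  have hsum : ∑ i, lam i ≤ (m : ℝ) * m := by
    have htr : (P.trace) = ((∑ i, lam i : ℝ) : ℂ) := by
      conv_lhs => rw [hH.spectral_theorem]
      rw [Unitary.conjStarAlgAut_apply, Matrix.trace_mul_cycle,
        Matrix.UnitaryGroup.star_mul_self hH.eigenvectorUnitary, Matrix.one_mul,
        Matrix.trace_diagonal]
      push_cast
      rfl
    have htr2 : P.trace = ∑ i, ∑ j, ((‖W i j‖ ^ 2 : ℝ) : ℂ) := by
      simp only [Matrix.trace, Matrix.diag, hPdef, Matrix.mul_apply, Matrix.conjTranspose_apply,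
        Complex.mul_conj']
      push_cast
      exact Finset.sum_congr rfl fun i _ => Finset.sum_congr rfl fun j _ =>
        Complex.mul_conj' (W i j)
    have : (∑ i, lam i : ℝ) = ∑ i : n, ∑ j : n, (‖W i j‖ ^ 2 : ℝ) := by
      have := htr.symm.trans htr2
      exact_mod_cast this
    rw [this]
    calc ∑ i : n, ∑ j : n, (‖W i j‖ ^ 2 : ℝ) ≤ ∑ _i : n, ∑ _j : n, (1 : ℝ) := by
          refine Finset.sum_le_sum fun i _ => Finset.sum_le_sum fun j _ => ?_
          exact pow_le_one₀ (norm_nonneg _) (hW i j) |>.trans_eq rfl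
      _ = (m : ℝ) * m := by simp [hm, mul_comm]
  -- AM-GM
  have hamgm : ∏ i, lam i ≤ (m : ℝ) ^ m := by
    have hw : ∀ i ∈ Finset.univ (α := n), (0:ℝ) ≤ 1 / m := fun _ _ => by positivity
    have hw' : ∑ _i : n, (1:ℝ)/m = 1 := by
      rw [Finset.sum_const, Finset.card_univ, ← hm, nsmul_eq_mul]
      field_simp
    have key := Real.geom_mean_le_arith_mean_weighted Finset.univ (fun _ => 1/m) lam hw hw'
      (fun i _ => hlam0 i)
    have hrhs : ∑ i, (1/m : ℝ) * lam i ≤ m := by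
      rw [← Finset.mul_sum]
      calc (1/m : ℝ) * ∑ i, lam i ≤ (1/m) * (m * m) := by
            exact mul_le_mul_of_nonneg_left hsum (by positivity)
        _ = m := by field_simp
    have hprod : (∏ i, lam i ^ (1/m : ℝ)) = (∏ i, lam i) ^ (1/m : ℝ) := by
      rw [← Real.finset_prod_rpow _ _ (fun i _ => hlam0 i)]
    have h3 : (∏ i, lam i) ^ (1/m : ℝ) ≤ (m : ℝ) := by
      rw [← hprod]; exact key.trans hrhs
    have h4 : ((∏ i, lam i) ^ (1/m : ℝ)) ^ (m : ℝ) ≤ (m : ℝ) ^ (m : ℝ) := by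
      apply Real.rpow_le_rpow (Real.rpow_nonneg (Finset.prod_nonneg fun i _ => hlam0 i) _) h3
        (by positivity)
    have h5 : ((∏ i, lam i) ^ (1/(m:ℝ) : ℝ)) ^ ((m:ℕ) : ℝ) = ∏ i, lam i := by
      rw [← Real.rpow_mul (Finset.prod_nonneg fun i _ => hlam0 i), one_div,
        inv_mul_cancel₀ (by positivity : (m:ℝ) ≠ 0), Real.rpow_one]
    rw [← Real.rpow_natCast (m:ℝ) m, ← h5]
    exact h4
  rw [hdet]; exact_mod_cast hamgm


open Matrix
open scoped Kronecker

lemma det_eq_of_mul_form {R : Type*} [CommRing R] {T S : Type*}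
    [Fintype T] [Fintype S] [DecidableEq T] [DecidableEq S]
    (A : Matrix T T R) (W : T → Matrix S S R) :
    (Matrix.of fun (p : T × S) (q : T × S) => A p.1 q.1 * W p.1 p.2 q.2).det
      = A.det ^ (Fintype.card S) * ∏ t, (W t).det := by
  classical
  have hfact : (Matrix.of fun (p : T × S) (q : T × S) => A p.1 q.1 * W p.1 p.2 q.2)
      = ((blockDiagonal fun t => W t).submatrix Prod.swap Prod.swap)
        * (A ⊗ₖ (1 : Matrix S S R)) := by
    ext ⟨t, s⟩ ⟨t', s'⟩
    rw [Matrix.mul_apply]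
    rw [Fintype.sum_prod_type]
    simp only [Matrix.submatrix_apply, Prod.swap_prod_mk, Matrix.blockDiagonal_apply,
      Matrix.kroneckerMap_apply, Matrix.one_apply, Matrix.of_apply]
    simp only [mul_ite, mul_one, mul_zero, ite_mul, zero_mul, Finset.sum_ite_eq,
      Finset.mem_univ, if_true]
    rw [Finset.sum_eq_single t]
    · simp [mul_comm]
    · intro u _ hu
      simp [hu.symm]  -- if t = u fails
    · simp
  have hD : ((blockDiagonal fun t => W t).submatrix Prod.swap Prod.swap).det
      = ∏ t, (W t).det := by
    rw [show (Prod.swap : T × S → S × T) = ⇑(Equiv.prodComm T S) from rfl,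
      Matrix.det_submatrix_equiv_self, Matrix.det_blockDiagonal]
  rw [hfact, Matrix.det_mul, hD, Matrix.det_kronecker, Matrix.det_one, one_pow, mul_one, mul_comm]


open NumberField Module Matrix

lemma abs_discr_le_abs_discr_of_basis {L : Type*} [Field L] [NumberField L]
    {ι : Type*} [Fintype ι] [DecidableEq ι] (b : Basis ι ℚ L)
    (hb : ∀ i, IsIntegral ℤ (b i)) :
    |(NumberField.discr L : ℚ)| ≤ |Algebra.discr ℚ (⇑b)| := by
  classical
  set e : Module.Free.ChooseBasisIndex ℤ (𝓞 L) ≃ ι := (integralBasis L).indexEquiv b with he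
  set ω : Basis ι ℚ L := (integralBasis L).reindex e with hω
  set M : Matrix ι ι ℚ := ω.toMatrix ⇑b with hM
  have hMint : ∀ i j, IsIntegral ℤ (M i j) := by
    intro i j
    have hx : algebraMap (𝓞 L) L ⟨b j, hb j⟩ = b j := rfl
    have : M i j = ((RingOfIntegers.basis L).repr ⟨b j, hb j⟩ (e.symm i) : ℚ) := by
      rw [hM, Basis.toMatrix_apply, hω, Basis.repr_reindex_apply]
      exact integralBasis_repr_apply L ⟨b j, hb j⟩ (e.symm i)
    rw [this]
    exact isIntegral_algebraMap
  have hbeq : (⇑ω ᵥ* (M.map <| algebraMap ℚ L)) = ⇑b := ω.toMatrix_map_vecMul ⇑b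
  have hdiscr : Algebra.discr ℚ (⇑b) = M.det ^ 2 * (NumberField.discr L : ℚ) := by
    rw [← hbeq, Algebra.discr_of_matrix_vecMul]
    congr 1
    rw [hω, Basis.coe_reindex, Algebra.discr_reindex, coe_discr]
  obtain ⟨z, hz⟩ := IsIntegrallyClosed.isIntegral_iff.mp (IsIntegral.det (fun i j => hMint i j))
  have hbne : Algebra.discr ℚ (⇑b) ≠ 0 := Algebra.discr_not_zero_of_basis ℚ b
  have hzne : z ≠ 0 := by
    rintro rfl
    rw [map_zero] at hz
    rw [hdiscr, ← hz] at hbne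
    simp at hbne
  have h1 : (1 : ℚ) ≤ M.det ^ 2 := by
    rw [← hz]
    have : (1 : ℤ) ≤ z ^ 2 := by
      have := sq_pos_of_ne_zero hzne
      omega
    calc (1:ℚ) ≤ ((z^2 : ℤ) : ℚ) := by exact_mod_cast this
      _ = (algebraMap ℤ ℚ z) ^ 2 := by push_cast; rfl
  rw [hdiscr, abs_mul]
  have h2 : |M.det ^ 2| = M.det ^ 2 := abs_of_nonneg (sq_nonneg _)
  rw [h2]
  nlinarith [abs_nonneg (NumberField.discr L : ℚ)]


open NumberField

/-- Let `K` be a number field of degree `d`, `ζ_N` a primitive `N`-th root of unity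
and `K̃ = K(ζ_N)`. Then `|D̃| ≤ N^{dN}·|D|^{φ(N)}`, where `D`, `D̃` are the absolute
discriminants of `K` and `K̃`. -/
theorem discr_adjoin_primitiveRoot_le
    (K L : Type*) [Field K] [NumberField K] [Field L] [NumberField L] [Algebra K L]
    (d : ℕ) (hd : d = Module.finrank ℚ K)
    (N : ℕ) (hN : 0 < N) (ζ : L) (hζ : IsPrimitiveRoot ζ N)
    (hL : Algebra.adjoin K {ζ} = ⊤) :
    (|(NumberField.discr L : ℝ)|) ≤
      (N : ℝ) ^ (d * N) * |(NumberField.discr K : ℝ)| ^ Nat.totient N := by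
  classical
  have hζint : IsIntegral ℤ ζ := hζ.isIntegral hN
  have hζK : IsIntegral K ζ := hζint.tower_top
  let pb : PowerBasis K L := (Algebra.adjoin.powerBasis hζK).map
    ((Subalgebra.equivOfEq _ _ hL).trans Subalgebra.topEquiv)
  have hgen : pb.gen = ζ := rfl
  have hdim : pb.dim = (minpoly K ζ).natDegree := rfl
  -- degree bounds
  have hdvd : minpoly K ζ ∣ Polynomial.cyclotomic N K := by
    apply minpoly.dvd
    have h1 : (Polynomial.aeval ζ) (Polynomial.cyclotomic N K)
        = Polynomial.eval ζ (Polynomial.cyclotomic N L) := by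
      rw [← Polynomial.map_cyclotomic N (algebraMap K L), Polynomial.eval_map,
        Polynomial.aeval_def]
    rw [h1]
    exact hζ.isRoot_cyclotomic hN
  have hmtot : pb.dim ≤ N.totient := by
    rw [hdim, ← Polynomial.natDegree_cyclotomic N K]
    exact Polynomial.natDegree_le_of_dvd hdvd (Polynomial.cyclotomic_ne_zero N K)
  have hmN : pb.dim ≤ N := hmtot.trans (Nat.totient_le N)
  -- the ℚ-basis of L
  let ι := Module.Free.ChooseBasisIndex ℤ (𝓞 K)
  let ω := NumberField.integralBasis K
  let b : Basis (ι × Fin pb.dim) ℚ L := ω.smulTower pb.basis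
  have hb_apply : ∀ (i : ι) (j : Fin pb.dim),
      b (i, j) = algebraMap K L (ω i) * ζ ^ (j : ℕ) := by
    intro i j
    rw [Basis.smulTower_apply, Algebra.smul_def, pb.basis_eq_pow, hgen]
  have hbint : ∀ ij, IsIntegral ℤ (b ij) := by
    rintro ⟨i, j⟩
    rw [hb_apply]
    refine IsIntegral.mul ?_ (hζint.pow _)
    have : IsIntegral ℤ (ω i) := by
      rw [NumberField.integralBasis_apply]
      exact (RingOfIntegers.isIntegral_coe _)
    exact this.algebraMap
  have hstep1 : |(NumberField.discr L : ℚ)| ≤ |Algebra.discr ℚ (⇑b)| :=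
    abs_discr_le_abs_discr_of_basis b hbint
  -- embeddings set-up
  have hcardι : Fintype.card ι = d := by
    rw [hd, Module.finrank_eq_card_basis (NumberField.integralBasis K)]
  have hcard1 : Fintype.card (K →ₐ[ℚ] ℂ) = Fintype.card ι := by
    rw [AlgHom.card, Module.finrank_eq_card_basis (NumberField.integralBasis K)]
  let eK : ι ≃ (K →ₐ[ℚ] ℂ) := (Fintype.equivOfCardEq hcard1).symm
  haveI : FiniteDimensional K L := FiniteDimensional.right ℚ K L
  have key : ∀ τ : K →ₐ[ℚ] ℂ,
      Nonempty ((Fin pb.dim) ≃ @AlgHom K L ℂ _ _ _ _ τ.toRingHom.toAlgebra) := by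
    intro τ
    letI : Algebra K ℂ := τ.toRingHom.toAlgebra
    have hc : Fintype.card (L →ₐ[K] ℂ) = pb.dim := by
      rw [AlgHom.card]; exact pb.finrank
    exact ⟨Fintype.equivOfCardEq (by simp [hc])⟩
  let f : ∀ τ : K →ₐ[ℚ] ℂ, (Fin pb.dim) ≃ @AlgHom K L ℂ _ _ _ _ τ.toRingHom.toAlgebra :=
    fun τ => (key τ).some
  let e : (ι × Fin pb.dim) ≃ (L →ₐ[ℚ] ℂ) :=
    (Equiv.prodCongr eK (Equiv.refl (Fin pb.dim))).trans <|
      (Equiv.sigmaEquivProd (K →ₐ[ℚ] ℂ) (Fin pb.dim)).symm.trans <|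
        (Equiv.sigmaCongrRight f).trans
          (algHomEquivSigma (A := ℚ) (B := K) (C := L) (D := ℂ)).symm
  have hres : ∀ (p : ι) (q : Fin pb.dim) (x : K),
      e (p, q) (algebraMap K L x) = eK p x := by
    intro p q x
    letI : Algebra K ℂ := (eK p).toRingHom.toAlgebra
    exact (f (eK p) q).commutes x
  have heζ : ∀ (p : ι) (q : Fin pb.dim), (e (p, q) ζ) ^ N = 1 := by
    intro p q
    rw [← _root_.map_pow, hζ.pow_eq_one, _root_.map_one]
  -- matrices
  let A : Matrix ι ι ℂ := Algebra.embeddingsMatrixReindex ℚ ℂ (⇑(NumberField.integralBasis K)) eK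
  let V : ι → Matrix (Fin pb.dim) (Fin pb.dim) ℂ :=
    fun p => Matrix.of fun q j => (e (p, q) ζ) ^ (j : ℕ)
  let E : Matrix (ι × Fin pb.dim) (ι × Fin pb.dim) ℂ :=
    Algebra.embeddingsMatrixReindex ℚ ℂ (⇑b) e
  have hEentry : ∀ (i p : ι) (j q : Fin pb.dim),
      E (i, j) (p, q) = Aᵀ p i * V p q j := by
    intro i p j q
    have h1 : E (i, j) (p, q) = (e (p, q)) (b (i, j)) := rfl
    have h2 : Aᵀ p i = (eK p) (ω i) := rfl
    rw [h1, h2, hb_apply, _root_.map_mul, _root_.map_pow, hres]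
    rfl
  have hEdet : Eᵀ.det = Aᵀ.det ^ pb.dim * ∏ p, (V p).det := by
    have hfact : Eᵀ = Matrix.of fun (pq : ι × Fin pb.dim) (ij : ι × Fin pb.dim) =>
        Aᵀ pq.1 ij.1 * (V pq.1) pq.2 ij.2 := by
      ext ⟨p, q⟩ ⟨i, j⟩
      rw [Matrix.transpose_apply, hEentry]
      rfl
    rw [hfact, det_eq_of_mul_form Aᵀ V, Fintype.card_fin]
  -- norms
  have h2 : (algebraMap ℚ ℂ) (Algebra.discr ℚ (⇑b)) = E.det ^ 2 :=
    Algebra.discr_eq_det_embeddingsMatrixReindex_pow_two ℚ ℂ (⇑b) e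
  have h3 : (algebraMap ℚ ℂ) ((NumberField.discr K : ℚ)) = A.det ^ 2 := by
    rw [NumberField.coe_discr]
    exact Algebra.discr_eq_det_embeddingsMatrixReindex_pow_two ℚ ℂ _ eK
  have hDb : |((Algebra.discr ℚ (⇑b) : ℚ) : ℝ)| = ‖E.det‖ ^ 2 := by
    have h := congrArg norm h2
    rw [norm_pow] at h
    rw [← h]
    simp
  have hDK : |(((NumberField.discr K : ℚ)) : ℝ)| = ‖A.det‖ ^ 2 := by
    have h := congrArg norm h3
    rw [norm_pow] at h
    rw [← h]
    simp
  have hVle : ∀ p, ‖(V p).det‖ ^ 2 ≤ (pb.dim : ℝ) ^ pb.dim := by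
    intro p
    have hW : ∀ q j, ‖(V p) q j‖ ≤ 1 := by
      intro q j
      have h1 : ‖e (p, q) ζ‖ = 1 := Complex.norm_eq_one_of_pow_eq_one (heζ p q) hN.ne'
      calc ‖(V p) q j‖ = ‖e (p, q) ζ‖ ^ (j : ℕ) := by
            rw [show (V p) q j = (e (p, q) ζ) ^ (j : ℕ) from rfl, norm_pow]
        _ = 1 := by rw [h1, one_pow]
        _ ≤ 1 := le_refl 1
    simpa using norm_det_sq_le_card_pow_card (V p) hW
  -- put everything together
  have hEnorm : ‖E.det‖ ^ 2 = (‖A.det‖ ^ 2) ^ pb.dim * ∏ p, ‖(V p).det‖ ^ 2 := by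
    have h4 : ‖E.det‖ = ‖A.det‖ ^ pb.dim * ∏ p, ‖(V p).det‖ := by
      rw [← Matrix.det_transpose E, hEdet, norm_mul, norm_pow, norm_prod,
        Matrix.det_transpose]
    rw [h4, mul_pow, ← Finset.prod_pow, ← pow_mul, ← pow_mul, Nat.mul_comm 2 pb.dim]
  have h1K : (1 : ℝ) ≤ |(NumberField.discr K : ℝ)| := by
    have : (1 : ℤ) ≤ |NumberField.discr K| := Int.one_le_abs (NumberField.discr_ne_zero K)
    calc (1:ℝ) ≤ ((|NumberField.discr K| : ℤ) : ℝ) := by exact_mod_cast this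
      _ = |(NumberField.discr K : ℝ)| := by push_cast; ring
  have habsK : |(((NumberField.discr K : ℚ)) : ℝ)| = |(NumberField.discr K : ℝ)| := by
    norm_cast
  calc |(NumberField.discr L : ℝ)| = |(((NumberField.discr L : ℚ)) : ℝ)| := by norm_cast
    _ ≤ |((Algebra.discr ℚ (⇑b) : ℚ) : ℝ)| := by
        rw [← Rat.cast_abs, ← Rat.cast_abs]
        exact_mod_cast hstep1
    _ = (‖A.det‖ ^ 2) ^ pb.dim * ∏ p, ‖(V p).det‖ ^ 2 := by rw [hDb, hEnorm]
    _ ≤ |(NumberField.discr K : ℝ)| ^ pb.dim * ∏ (_p : ι), (pb.dim : ℝ) ^ pb.dim := by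
        refine mul_le_mul ?_ ?_ ?_ ?_
        · rw [← hDK, habsK]
        · exact Finset.prod_le_prod (fun p _ => by positivity) (fun p _ => hVle p)
        · exact Finset.prod_nonneg fun p _ => by positivity
        · positivity
    _ = |(NumberField.discr K : ℝ)| ^ pb.dim * ((pb.dim : ℝ) ^ pb.dim) ^ d := by
        rw [Finset.prod_const, Finset.card_univ, hcardι]
    _ ≤ |(NumberField.discr K : ℝ)| ^ N.totient * (N : ℝ) ^ (d * N) := by
        refine mul_le_mul ?_ ?_ (by positivity) (by positivity)
        · exact pow_le_pow_right₀ h1K hmtot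
        · have h5 : ((pb.dim : ℝ) ^ pb.dim) ^ d = (pb.dim : ℝ) ^ (pb.dim * d) := by
            rw [← pow_mul]
          have h6 : ((pb.dim : ℕ) ^ pb.dim : ℕ) ≤ N ^ N :=
            (Nat.pow_le_pow_left hmN pb.dim).trans (Nat.pow_le_pow_right hN hmN)
          calc ((pb.dim : ℝ) ^ pb.dim) ^ d = (((pb.dim ^ pb.dim : ℕ) : ℝ)) ^ d := by push_cast; ring
            _ ≤ ((N ^ N : ℕ) : ℝ) ^ d := by
                apply pow_le_pow_left₀ (by positivity) _ d
                exact_mod_cast h6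
            _ = (N : ℝ) ^ (d * N) := by
                push_cast
                rw [← pow_mul, Nat.mul_comm]
    _ = (N : ℝ) ^ (d * N) * |(NumberField.discr K : ℝ)| ^ N.totient := by ring
end
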